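/- arXiv:2004.13258 — 6 statements merged into one kernel-verified Lean document; each statement's English description precedes it below -/
import Mathlib

section
/- Let α be a unital partial action of a finite group G on a commutative ring S, and R a subring of S with the same identity. Then S ⊇ R is a partial Galois extension if and only if R = S^α and there exist elements x_1,…,x_m, y_1,…,y_m ∈ S such that for all g, h ∈ G, ∑_{i=1}^m α_g(x_i 1_{g⁻¹}) α_h(y_i 1_{h⁻¹}) = δ_{g,h} 1_g. -/
/-- A unital partial action of a group `G` on a commutative ring `S`.
The unital ideal `S_g` is `S * e g` where `e g` is a central idempotent,
and `act g` is the partial isomorphism `α_g` (extended to all of `S` by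
first multiplying by the identity `e g⁻¹` of its domain ideal). -/
structure PartialAction (G : Type*) [Group G] (S : Type*) [CommRing S] where
  e : G → S
  act : G → S → S
  e_idem : ∀ g, e g * e g = e g
  e_one : e 1 = 1
  act_one : ∀ x, act 1 x = x
  act_add : ∀ g x y, act g (x + y) = act g x + act g y
  act_mul : ∀ g x y, act g (x * y) = act g x * act g y
  act_restrict : ∀ g x, act g (x * e g⁻¹) = act g x
  act_mem : ∀ g x, act g x * e g = act g x
  act_e : ∀ g, act g (e g⁻¹) = e g
  act_inter : ∀ g h, act g (e g⁻¹ * e h) = e g * e (g * h)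
  act_comp : ∀ g h x, act g (act h x * e g⁻¹) = act (g * h) (x * e h⁻¹) * e g
  act_inv : ∀ g x, act g⁻¹ (act g (x * e g⁻¹)) = x * e g⁻¹

namespace PartialAction

variable {G : Type*} [Group G] {S : Type*} [CommRing S] (P : PartialAction G S)

/-- The subring of subinvariants `S^α`. -/
def invariants : Set S := {a | ∀ g : G, P.act g (a * P.e g⁻¹) = a * P.e g}

/-- `S ⊇ R` is a partial Galois extension: `R = S^α` and there is a
partial Galois coordinate system. -/
def IsPartialGalois [Fintype G] [DecidableEq G] (R : Subring S) : Prop :=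
  ((R : Set S) = P.invariants) ∧
    ∃ m : ℕ, ∃ x y : Fin m → S, ∀ g : G,
      (∑ i : Fin m, x i * P.act g (y i * P.e g⁻¹)) = if g = 1 then 1 else 0

/-- A partial 1-cocycle with values in `S`: `f g` is invertible in the
unital ideal `S e g` with inverse `finv g`, and the cocycle identity holds. -/
structure Cocycle where
  f : G → S
  finv : G → S
  f_mem : ∀ g, f g * P.e g = f g
  finv_mem : ∀ g, finv g * P.e g = finv g
  f_mul_finv : ∀ g, f g * finv g = P.e g
  cocycle : ∀ g h, f (g * h) * P.e g = f g * P.act g (f h * P.e g⁻¹)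

variable {P}

theorem act_zero (g : G) : P.act g 0 = 0 := by
  have := P.act_add g 0 0
  simpa using this.symm

/-- The set `Q_f = {a ∈ S : α_g(a 1_{g⁻¹}) = f(g) a for all g}` attached to a map `f : G → S`. -/
def Qset (P : PartialAction G S) (f : G → S) : Set S :=
  {a | ∀ g : G, P.act g (a * P.e g⁻¹) = f g * a}

/-- `Q_f` as an `R`-submodule of `S`, where `R` is a subring of invariants. -/
def Qmod (P : PartialAction G S) (R : Subring S)
    (hR : ∀ r ∈ R, ∀ g : G, P.act g (r * P.e g⁻¹) = r * P.e g)
    (f : G → S) : Submodule R S where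
  carrier := Qset P f
  zero_mem' := by
    intro g
    simp [Qset, act_zero]
  add_mem' := by
    intro a b ha hb g
    have := P.act_add g (a * P.e g⁻¹) (b * P.e g⁻¹)
    rw [Qset] at *
    rw [add_mul, this, ha g, hb g, mul_add]
  smul_mem' := by
    intro c x hx g
    have hc : (c : S) ∈ (R : Set S) := c.2
    have hcx : c • x = (c : S) * x := Subring.smul_def c x
    have hx' : ∀ g : G, P.act g (x * P.e g⁻¹) = f g * x := hx
    rw [hcx]
    have h1 : P.act g ((c : S) * x * P.e g⁻¹) = P.act g ((c : S)) * P.act g x := by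
      rw [P.act_restrict, P.act_mul]
    have h2 : P.act g ((c : S)) = (c : S) * P.e g := by
      rw [← P.act_restrict g (c : S), hR c c.2 g]
    have h3 : P.act g x = f g * x := by
      rw [← P.act_restrict g x]; exact hx' g
    have h4 : (f g * x) * P.e g = f g * x := by
      have := P.act_mem g (x * P.e g⁻¹)
      rw [P.act_restrict, h3] at this
      exact this
    rw [h1, h2, h3]
    have h5 : (c : S) * P.e g * (f g * x) = (c : S) * (f g * x * P.e g) := by ring
    rw [h5, h4]
    ring

end PartialAction


theorem act_sum' {G : Type*} [Group G] {S : Type*} [CommRing S] (P : PartialAction G S)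
    (g : G) {m : ℕ} (f : Fin m → S) :
    P.act g (∑ i : Fin m, f i) = ∑ i : Fin m, P.act g (f i) :=
  map_sum (AddMonoidHom.mk' (P.act g) (P.act_add g)) f Finset.univ

/-- `S ⊇ R` is a partial Galois extension iff `R = S^α` and there
are elements `x_i, y_i` with `∑ α_g(x_i 1_{g⁻¹}) α_h(y_i 1_{h⁻¹}) = δ_{g,h} 1_g`. -/
theorem partialGalois_iff_coordinates {G : Type*} [Group G] [Fintype G] [DecidableEq G]
    {S : Type*} [CommRing S] (P : PartialAction G S) (R : Subring S) :
    P.IsPartialGalois R ↔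
      ((R : Set S) = P.invariants) ∧
        ∃ m : ℕ, ∃ x y : Fin m → S, ∀ g h : G,
          (∑ i : Fin m, P.act g (x i * P.e g⁻¹) * P.act h (y i * P.e h⁻¹)) =
            if g = h then P.e g else 0 := by
  constructor
  · rintro ⟨hinv, m, x, y, hxy⟩
    refine ⟨hinv, m, x, y, fun g h => ?_⟩
    set k := g⁻¹ * h with hk
    have key : P.act g ((∑ i : Fin m, x i * P.act k (y i * P.e k⁻¹)) * P.e g⁻¹)
        = if g = h then P.e g else 0 := by
      rw [hxy k]
      by_cases hgh : g = h
      · have hk1 : k = 1 := by rw [hk, hgh, inv_mul_cancel]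
        rw [if_pos hk1, if_pos hgh, one_mul, P.act_e]
      · have hk1 : k ≠ 1 := fun hc => hgh (by rwa [hk, inv_mul_eq_one] at hc)
        rw [if_neg hk1, if_neg hgh, zero_mul, PartialAction.act_zero]
    rw [Finset.sum_mul, act_sum'] at key
    refine Eq.trans ?_ key
    refine Finset.sum_congr rfl fun i _ => ?_
    set A := P.act g (x i * P.e g⁻¹) with hA'
    set B := P.act h (y i * P.e h⁻¹) with hB'
    have H1 : P.act g (x i * P.act k (y i * P.e k⁻¹) * P.e g⁻¹)
        = A * (P.act h (y i * P.e k⁻¹) * P.e g) := by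
      have s1 : x i * P.act k (y i * P.e k⁻¹) * P.e g⁻¹
          = (x i * P.e g⁻¹) * (P.act k (y i * P.e k⁻¹) * P.e g⁻¹) := by
        linear_combination (-(x i * P.act k (y i * P.e k⁻¹))) * P.e_idem g⁻¹
      have hgk : g * k = h := by rw [hk]; group
      have s3 : y i * P.e k⁻¹ * P.e k⁻¹ = y i * P.e k⁻¹ := by
        linear_combination (y i) * P.e_idem k⁻¹
      rw [s1, P.act_mul, P.act_comp g k (y i * P.e k⁻¹), hgk, s3]
    have H2 : P.act h (y i * P.e k⁻¹) = B * (P.e h * P.e g) := by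
      rw [← P.act_restrict h (y i * P.e k⁻¹)]
      have s4 : y i * P.e k⁻¹ * P.e h⁻¹ = (y i * P.e h⁻¹) * (P.e h⁻¹ * P.e k⁻¹) := by
        linear_combination (-(y i * P.e k⁻¹)) * P.e_idem h⁻¹
      have hhk : h * k⁻¹ = g := by rw [hk]; group
      rw [s4, P.act_mul, P.act_inter h k⁻¹, hhk]
    rw [H1, H2]
    have hAe : A * P.e g = A := P.act_mem g (x i * P.e g⁻¹)
    have hBe : B * P.e h = B := P.act_mem h (y i * P.e h⁻¹)
    have he : P.e g * P.e g = P.e g := P.e_idem g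
    linear_combination (-A * P.e g * P.e g) * hBe + (-A * B) * he + (-B) * hAe
  · rintro ⟨hinv, m, x, y, hxy⟩
    refine ⟨hinv, m, x, y, fun g => ?_⟩
    have h1 := hxy 1 g
    simp only [inv_one, P.e_one, mul_one, P.act_one] at h1
    rw [h1]
    exact if_congr eq_comm rfl rfl
end

section
/- Let S ⊇ R be a partial Galois extension of a finite abelian group G with unital partial action α, let w ∈ S satisfy tr_{S/R}(w) = ∑_{g∈G} α_g(w 1_{g⁻¹}) = 1, and let f be a partial 1-cocycle. Define f̂ : S → S by f̂(x) = ∑_{g∈G} f(g)⁻¹ α_g(w x 1_{g⁻¹}). Then f̂ is an R-linear idempotent endomorphism of S, i.e. f̂ ∘ f̂ = f̂. -/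
section Aux

variable {G : Type*} [Group G] {S : Type*} [CommRing S] {P : PartialAction G S}

theorem PA_act_sum {ι : Type*} (s : Finset ι) (g : G) (f : ι → S) :
    P.act g (∑ i ∈ s, f i) = ∑ i ∈ s, P.act g (f i) := by
  induction s using Finset.cons_induction with
  | empty => simpa using PartialAction.act_zero (P := P) g
  | cons a s ha ih => rw [Finset.sum_cons, Finset.sum_cons, P.act_add, ih]

theorem PA_e_mul (g h : G) : P.act g (P.e h) = P.e g * P.e (g * h) := by
  rw [← P.act_restrict g (P.e h), mul_comm, P.act_inter]

theorem PA_mul_restrict (g : G) (a b : S) :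
    P.act g (a * b * P.e g⁻¹) = P.act g (a * P.e g⁻¹) * P.act g (b * P.e g⁻¹) := by
  have h1 : a * b * P.e g⁻¹ = (a * P.e g⁻¹) * (b * P.e g⁻¹) := by
    linear_combination (-(a * b)) * P.e_idem g⁻¹
  rw [h1, P.act_mul]

theorem PA_finv_shift (c : P.Cocycle) (h g : G) :
    P.act h (c.finv g * P.e h⁻¹) = c.f h * c.finv (h * g) := by
  set A := P.act h (c.finv g * P.e h⁻¹) with hA
  set B := P.act h (c.f g * P.e h⁻¹) with hB
  have h1 : c.f (h * g) * P.e h = c.f h * B := c.cocycle h g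
  have h2 : B * A = P.e h * P.e (h * g) := by
    rw [hA, hB, ← P.act_mul]
    have harg : c.f g * P.e h⁻¹ * (c.finv g * P.e h⁻¹) = P.e h⁻¹ * P.e g := by
      linear_combination (P.e h⁻¹ * P.e h⁻¹) * c.f_mul_finv g + P.e g * P.e_idem h⁻¹
    rw [harg, P.act_inter]
  have h3 : A = P.act h (c.finv g) * (P.e h * P.e (h * g)) := by
    rw [hA]
    have harg : c.finv g * P.e h⁻¹ = c.finv g * (P.e h⁻¹ * P.e g) := by
      linear_combination (-(P.e h⁻¹)) * c.finv_mem g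
    rw [harg, P.act_mul, P.act_inter]
  have h3a : A * P.e h = A := by
    linear_combination (P.e h - 1) * h3 + P.act h (c.finv g) * P.e (h * g) * P.e_idem h
  have h3b : A * P.e (h * g) = A := by
    linear_combination (P.e (h * g) - 1) * h3 + P.act h (c.finv g) * P.e h * P.e_idem (h * g)
  have fA : c.f (h * g) * A = c.f h * P.e (h * g) := by
    linear_combination A * h1 + c.f h * h2 - c.f (h * g) * h3a + P.e (h * g) * c.f_mem h
  linear_combination -h3b - A * c.f_mul_finv (h * g) + c.finv (h * g) * fA
    + c.f h * c.finv_mem (h * g)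

end Aux


/-- the map `f̂(x) = ∑_g f(g)⁻¹ α_g(w x 1_{g⁻¹})` is idempotent. -/
theorem hat_idempotent {G : Type*} [CommGroup G] [Fintype G] [DecidableEq G]
    {S : Type*} [CommRing S] (P : PartialAction G S) (R : Subring S)
    (hGal : P.IsPartialGalois R)
    (w : S) (hw : (∑ g : G, P.act g (w * P.e g⁻¹)) = 1)
    (c : P.Cocycle) (F : S → S)
    (hF : ∀ x, F x = ∑ g : G, c.finv g * P.act g (w * x * P.e g⁻¹)) :
    ∀ x, F (F x) = F x := by
  intro x
  have hQ : ∀ h : G, P.act h (F x * P.e h⁻¹) = c.f h * F x := by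
    intro h
    rw [hF x, Finset.sum_mul, PA_act_sum, Finset.mul_sum,
      ← Equiv.sum_comp (Equiv.mulLeft h)
        (fun k => c.f h * (c.finv k * P.act k (w * x * P.e k⁻¹)))]
    refine Finset.sum_congr rfl fun g _ => ?_
    simp only [Equiv.coe_mulLeft]
    rw [PA_mul_restrict, PA_finv_shift c h g, P.act_comp]
    have e2 : w * x * P.e g⁻¹ * P.e g⁻¹ = w * x * P.e g⁻¹ := by
      linear_combination (w * x) * P.e_idem g⁻¹
    rw [e2]
    have e3 : P.act (h * g) (w * x * P.e g⁻¹)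
        = P.act (h * g) (w * x * P.e (h * g)⁻¹) * (P.e (h * g) * P.e h) := by
      rw [P.act_mul (h * g) (w * x) (P.e g⁻¹), PA_e_mul, mul_inv_cancel_right,
        ← P.act_restrict (h * g) (w * x)]
    rw [e3]
    linear_combination
      (c.f h * P.act (h * g) (w * x * P.e (h * g)⁻¹) * P.e h * P.e h) * c.finv_mem (h * g)
      + c.f h * c.finv (h * g) * P.act (h * g) (w * x * P.e (h * g)⁻¹) * P.e_idem h
      + c.finv (h * g) * P.act (h * g) (w * x * P.e (h * g)⁻¹) * c.f_mem h
  have key : ∀ g : G, c.finv g * P.act g (w * F x * P.e g⁻¹) = P.act g (w * P.e g⁻¹) * F x := by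
    intro g
    rw [PA_mul_restrict, hQ g]
    linear_combination P.act g (w * P.e g⁻¹) * F x * c.f_mul_finv g
      + F x * P.act_mem g (w * P.e g⁻¹)
  calc F (F x) = ∑ g : G, c.finv g * P.act g (w * F x * P.e g⁻¹) := hF (F x)
    _ = ∑ g : G, P.act g (w * P.e g⁻¹) * F x := Finset.sum_congr rfl fun g _ => key g
    _ = (∑ g : G, P.act g (w * P.e g⁻¹)) * F x := by rw [Finset.sum_mul]
    _ = F x := by rw [hw, one_mul]
end

section
/- With notation as above, the image Q_f of the idempotent map f̂ equals the set {a ∈ S : α_g(a 1_{g⁻¹}) = f(g) a for all g ∈ G}. -/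
namespace PartialAction

variable {G : Type*} [Group G] {S : Type*} [CommRing S]

theorem act_sum (P : PartialAction G S) {ι : Type*} (g : G) (s : Finset ι) (φ : ι → S) :
    P.act g (∑ i ∈ s, φ i) = ∑ i ∈ s, P.act g (φ i) :=
  map_sum (AddMonoidHom.mk' (P.act g) (P.act_add g)) φ s

theorem act_e_eq_mul_e (P : PartialAction G S) (g k : G) :
    P.act g (P.e k) = P.e g * P.e (g * k) := by
  rw [← P.act_restrict g (P.e k), mul_comm (P.e k), P.act_inter]

theorem act_act (P : PartialAction G S) (h g : G) (x : S) :
    P.act h (P.act g x) = P.act (h * g) x * P.e h := by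
  rw [← P.act_restrict h, P.act_comp, P.act_mul, P.act_e_eq_mul_e, mul_inv_cancel_right,
    ← mul_assoc, P.act_mem, mul_assoc, P.e_idem]

theorem mem_Qset_iff {P : PartialAction G S} {f : G → S} {a : S} :
    a ∈ Qset P f ↔ ∀ g, P.act g a = f g * a := by
  simp only [Qset, Set.mem_ofPred_eq, P.act_restrict]

namespace Cocycle

variable {P : PartialAction G S} (c : P.Cocycle)

theorem act_finv (h g : G) : P.act h (c.finv g) = c.f h * c.finv (h * g) := by
  have hsupp : P.act h (c.finv g) = P.act h (c.finv g) * (P.e h * P.e (h * g)) := by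
    conv_lhs => rw [← c.finv_mem g, P.act_mul, P.act_e_eq_mul_e]
  have hcoc : c.f (h * g) * P.e h = c.f h * P.act h (c.f g) := by
    rw [← P.act_restrict h (c.f g)]
    exact c.cocycle h g
  have hinv : P.act h (c.f g) * P.act h (c.finv g) = P.e h * P.e (h * g) := by
    rw [← P.act_mul, c.f_mul_finv, P.act_e_eq_mul_e]
  calc P.act h (c.finv g)
      = P.act h (c.finv g) * (c.f (h * g) * P.e h) * c.finv (h * g) := by
        conv_lhs => rw [hsupp, ← c.f_mul_finv (h * g)]
        ring
    _ = c.f h * (P.act h (c.f g) * P.act h (c.finv g)) * c.finv (h * g) := by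
        rw [hcoc]; ring
    _ = c.f h * P.e h * (c.finv (h * g) * P.e (h * g)) := by
        rw [hinv]; ring
    _ = c.f h * c.finv (h * g) := by
        rw [c.f_mem, c.finv_mem]

theorem act_finv_mul_act (h g : G) (y : S) :
    P.act h (c.finv g * P.act g y) = c.f h * (c.finv (h * g) * P.act (h * g) y) := by
  rw [P.act_mul, c.act_finv, P.act_act]
  linear_combination c.finv (h * g) * P.act (h * g) y * c.f_mem h

variable [Fintype G]

def hat (w x : S) : S :=
  ∑ g : G, c.finv g * P.act g (w * x * P.e g⁻¹)

theorem hat_eq_sum (w x : S) : c.hat w x = ∑ g : G, c.finv g * P.act g (w * x) := by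
  simp only [hat, P.act_restrict]

theorem hat_mem_Qset (w x : S) : c.hat w x ∈ Qset P c.f := by
  refine mem_Qset_iff.2 fun h => ?_
  rw [hat_eq_sum, P.act_sum, Finset.mul_sum]
  simp only [c.act_finv_mul_act]
  exact Equiv.sum_comp (Equiv.mulLeft h) fun g => c.f h * (c.finv g * P.act g (w * x))

theorem hat_eq_self_of_mem_Qset {w a : S} (hw : ∑ g : G, P.act g (w * P.e g⁻¹) = 1)
    (ha : a ∈ Qset P c.f) : c.hat w a = a := by
  have hterm : ∀ g, c.finv g * P.act g (w * a) = P.act g w * a := fun g => by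
    rw [P.act_mul, mem_Qset_iff.1 ha g]
    linear_combination a * P.act g w * c.f_mul_finv g + a * P.act_mem g w
  simp only [P.act_restrict] at hw
  rw [hat_eq_sum, Finset.sum_congr rfl fun g _ => hterm g, ← Finset.sum_mul, hw, one_mul]

end Cocycle

end PartialAction

theorem range_hat_eq_Qset_general {G : Type*} [CommGroup G] [Fintype G]
    {S : Type*} [CommRing S] (P : PartialAction G S)
    (w : S) (hw : (∑ g : G, P.act g (w * P.e g⁻¹)) = 1)
    (c : P.Cocycle) (F : S → S)
    (hF : ∀ x, F x = ∑ g : G, c.finv g * P.act g (w * x * P.e g⁻¹)) :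
    Set.range F = PartialAction.Qset P c.f := by
  obtain rfl : F = c.hat w := funext hF
  ext a
  exact ⟨fun ⟨x, hx⟩ => hx ▸ c.hat_mem_Qset w x,
    fun ha => ⟨a, c.hat_eq_self_of_mem_Qset hw ha⟩⟩

/-- the image of `f̂` is `Q_f = {a : α_g(a 1_{g⁻¹}) = f(g) a, ∀ g}`. -/
theorem range_hat_eq_Qset {G : Type*} [CommGroup G] [Fintype G] [DecidableEq G]
    {S : Type*} [CommRing S] (P : PartialAction G S) (R : Subring S)
    (hGal : P.IsPartialGalois R)
    (w : S) (hw : (∑ g : G, P.act g (w * P.e g⁻¹)) = 1)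
    (c : P.Cocycle) (F : S → S)
    (hF : ∀ x, F x = ∑ g : G, c.finv g * P.act g (w * x * P.e g⁻¹)) :
    Set.range F = PartialAction.Qset P c.f :=
  range_hat_eq_Qset_general P w hw c F hF
end

section
/- Let f be a partial 1-coboundary, i.e. f(g) = α_g(u 1_{g⁻¹}) u⁻¹ for some unit u ∈ U(S). Then Q_f = R u, the free R-submodule of S generated by u. -/
/-- if `f` is a 1-coboundary, `f(g) = α_g(u 1_{g⁻¹}) u⁻¹` for a unit `u`,
then `Q_f = R u`. -/
theorem Qset_coboundary {G : Type*} [CommGroup G] [Fintype G] [DecidableEq G]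
    {S : Type*} [CommRing S] (P : PartialAction G S) (R : Subring S)
    (hGal : P.IsPartialGalois R)
    (c : P.Cocycle) (u : Sˣ)
    (hc : ∀ g : G, c.f g = P.act g ((u : S) * P.e g⁻¹) * ((u⁻¹ : Sˣ) : S)) :
    PartialAction.Qset P c.f = {a : S | ∃ r ∈ R, a = r * (u : S)} := by
  have act_one' : ∀ g : G, P.act g 1 = P.e g := by
    intro g
    have h := P.act_restrict g 1
    rw [one_mul] at h
    rw [← h, P.act_e]
  have key : ∀ g : G, P.act g ((u : S)) * P.act g ((u⁻¹ : Sˣ) : S) = P.e g := by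
    intro g
    rw [← P.act_mul]
    simp [act_one']
  ext a
  constructor
  · intro ha
    refine ⟨a * ((u⁻¹ : Sˣ) : S), ?_, by simp [mul_assoc]⟩
    rw [← SetLike.mem_coe, hGal.1]
    intro g
    have h1 : P.act g (a * ((u⁻¹ : Sˣ) : S) * P.e g⁻¹) = P.act g a * P.act g ((u⁻¹ : Sˣ) : S) := by
      rw [P.act_restrict, P.act_mul]
    have h2 : P.act g a = c.f g * a := by
      rw [← P.act_restrict g a]; exact ha g
    rw [h1, h2, hc g, P.act_restrict]
    calc P.act g (u : S) * ((u⁻¹ : Sˣ) : S) * a * P.act g ((u⁻¹ : Sˣ) : S)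
        = (P.act g (u : S) * P.act g ((u⁻¹ : Sˣ) : S)) * (((u⁻¹ : Sˣ) : S) * a) := by ring
      _ = a * ((u⁻¹ : Sˣ) : S) * P.e g := by rw [key g]; ring
  · rintro ⟨r, hr, rfl⟩
    intro g
    have hrinv : r ∈ P.invariants := by rw [← hGal.1]; exact hr
    have h1 : P.act g (r * (u : S) * P.e g⁻¹) = P.act g r * P.act g ((u : S)) := by
      rw [P.act_restrict, P.act_mul]
    have h2 : P.act g r = r * P.e g := by
      rw [← P.act_restrict g r]; exact hrinv g
    have h3 : P.act g ((u : S)) * P.e g = P.act g ((u : S)) := P.act_mem g _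
    rw [h1, h2, hc g, P.act_restrict]
    calc r * P.e g * P.act g (u : S)
        = (P.act g (u : S) * P.e g) * r := by ring
      _ = P.act g (u : S) * r := by rw [h3]
      _ = P.act g (u : S) * ((u⁻¹ : Sˣ) : S) * (r * (u : S)) := by
          have h : ((u⁻¹ : Sˣ) : S) * (u : S) = 1 := by simp
          calc P.act g (u : S) * r
              = P.act g (u : S) * r * (((u⁻¹ : Sˣ) : S) * (u : S)) := by rw [h, mul_one]
            _ = P.act g (u : S) * ((u⁻¹ : Sˣ) : S) * (r * (u : S)) := by ring
end

section
/- Let f be a partial 1-cocycle and define f̃ : S → S by f̃(x) = ∑_{g∈G} f(g)⁻¹ α_g(x 1_{g⁻¹}). Then Im(f̃) = Im(f̂) = Q_f; in particular Q_f does not depend on the choice of the trace-one element w used to define f̂. -/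
section Aux

open PartialAction

variable {G : Type*} [Group G] {S : Type*} [CommRing S] (P : PartialAction G S)

lemma aux_split {S : Type*} [CommRing S] (e a b : S) (he : e * e = e) :
    a * b * e = (a * e) * (b * e) := by linear_combination -(a * b) * he

lemma aux_act_sum {ι : Type*} (g : G) (s : Finset ι) (F : ι → S) :
    P.act g (∑ i ∈ s, F i) = ∑ i ∈ s, P.act g (F i) := by
  induction s using Finset.cons_induction with
  | empty => simp [PartialAction.act_zero]
  | cons a s ha ih => rw [Finset.sum_cons, Finset.sum_cons, P.act_add, ih]

lemma aux_key_finv (c : P.Cocycle) (h g : G) :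
    P.e (h * g) * P.act h (c.finv g * P.e h⁻¹) = c.f h * c.finv (h * g) := by
  set A := P.act h (c.f g * P.e h⁻¹) with hA
  set B := P.act h (c.finv g * P.e h⁻¹) with hB
  have hAB : A * B = P.e h * P.e (h * g) := by
    rw [hA, hB, ← P.act_mul]
    have h1 : c.f g * P.e h⁻¹ * (c.finv g * P.e h⁻¹) = P.e h⁻¹ * P.e g := by
      linear_combination (P.e h⁻¹ * P.e h⁻¹) * c.f_mul_finv g + P.e g * P.e_idem h⁻¹
    rw [h1, P.act_inter]
  have hBe : B * P.e h = B := by rw [hB, P.act_restrict, P.act_mem]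
  have c1 := c.cocycle h g
  calc P.e (h * g) * B
      = (c.f (h * g) * c.finv (h * g)) * B := by rw [c.f_mul_finv]
    _ = c.finv (h * g) * ((c.f (h * g) * P.e h) * B) := by
        linear_combination -(c.f (h * g) * c.finv (h * g)) * hBe
    _ = c.finv (h * g) * ((c.f h * A) * B) := by rw [c1]
    _ = c.f h * c.finv (h * g) * (A * B) := by ring
    _ = c.f h * c.finv (h * g) * (P.e h * P.e (h * g)) := by rw [hAB]
    _ = (c.f h * P.e h) * (c.finv (h * g) * P.e (h * g)) := by ring
    _ = c.f h * c.finv (h * g) := by rw [c.f_mem, c.finv_mem]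

lemma aux_term_eq (c : P.Cocycle) (h g : G) (x : S) :
    P.act h (c.finv g * P.act g (x * P.e g⁻¹) * P.e h⁻¹)
      = c.f h * (c.finv (h * g) * P.act (h * g) (x * P.e (h * g)⁻¹)) := by
  have h1 : c.finv g * P.act g (x * P.e g⁻¹) * P.e h⁻¹
      = (c.finv g * P.e h⁻¹) * (P.act g (x * P.e g⁻¹) * P.e h⁻¹) :=
    aux_split _ _ _ (P.e_idem h⁻¹)
  rw [h1, P.act_mul, P.act_comp h g (x * P.e g⁻¹), mul_assoc x, P.e_idem]
  -- goal now: B * (act (h*g) (x * e g⁻¹) * e h) = f h * (finv (h*g) * act (h*g) (x * e (h*g)⁻¹))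
  have h3 : P.act (h * g) (x * P.e g⁻¹) = P.act (h * g) (x * P.e (h * g)⁻¹) * P.e h := by
    conv_lhs => rw [← P.act_restrict (h * g)]
    have h4 : x * P.e g⁻¹ * P.e (h * g)⁻¹
        = (x * P.e (h * g)⁻¹) * (P.e (h * g)⁻¹ * P.e g⁻¹) := by
      linear_combination -(x * P.e g⁻¹) * P.e_idem (h * g)⁻¹
    rw [h4, P.act_mul, P.act_inter]
    rw [show h * g * g⁻¹ = h from mul_inv_cancel_right h g]
    rw [← mul_assoc, P.act_mem]
  rw [h3]
  have hBe : P.act h (c.finv g * P.e h⁻¹) * P.e h = P.act h (c.finv g * P.e h⁻¹) := by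
    rw [P.act_restrict, P.act_mem]
  have hXe : P.act (h * g) (x * P.e (h * g)⁻¹) * P.e (h * g)
      = P.act (h * g) (x * P.e (h * g)⁻¹) := P.act_mem _ _
  calc P.act h (c.finv g * P.e h⁻¹) * (P.act (h * g) (x * P.e (h * g)⁻¹) * P.e h * P.e h)
      = (P.act h (c.finv g * P.e h⁻¹) * P.e h * P.e h)
          * (P.act (h * g) (x * P.e (h * g)⁻¹) * P.e (h * g)) := by rw [hXe]; ring
    _ = (P.e (h * g) * P.act h (c.finv g * P.e h⁻¹))
          * P.act (h * g) (x * P.e (h * g)⁻¹) := by rw [hBe, hBe]; ring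
    _ = c.f h * c.finv (h * g) * P.act (h * g) (x * P.e (h * g)⁻¹) := by
        rw [aux_key_finv]
    _ = c.f h * (c.finv (h * g) * P.act (h * g) (x * P.e (h * g)⁻¹)) := by ring

end Aux


/-- `Im(f̃) = Im(f̂) = Q_f`; in particular `Q_f` does not depend on `w`. -/
theorem range_tilde_eq_range_hat {G : Type*} [CommGroup G] [Fintype G] [DecidableEq G]
    {S : Type*} [CommRing S] (P : PartialAction G S) (R : Subring S)
    (hGal : P.IsPartialGalois R)
    (w : S) (hw : (∑ g : G, P.act g (w * P.e g⁻¹)) = 1)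
    (c : P.Cocycle) (Fhat Ftilde : S → S)
    (hFhat : ∀ x, Fhat x = ∑ g : G, c.finv g * P.act g (w * x * P.e g⁻¹))
    (hFtilde : ∀ x, Ftilde x = ∑ g : G, c.finv g * P.act g (x * P.e g⁻¹)) :
    Set.range Ftilde = Set.range Fhat ∧ Set.range Fhat = PartialAction.Qset P c.f := by
  -- Fhat x = Ftilde (w * x)
  have hhat : ∀ x, Fhat x = Ftilde (w * x) := by
    intro x; rw [hFhat, hFtilde]
  -- Ftilde x ∈ Q_f
  have htilde_mem : ∀ x, Ftilde x ∈ PartialAction.Qset P c.f := by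
    intro x h
    rw [hFtilde]
    rw [Finset.sum_mul, aux_act_sum]
    have hterm : ∀ g ∈ Finset.univ, P.act h (c.finv g * P.act g (x * P.e g⁻¹) * P.e h⁻¹)
        = c.f h * (c.finv (h * g) * P.act (h * g) (x * P.e (h * g)⁻¹)) :=
      fun g _ => aux_term_eq P c h g x
    rw [Finset.sum_congr rfl hterm, ← Finset.mul_sum]
    congr 1
    exact Fintype.sum_equiv (Equiv.mulLeft h) _ _ (fun g => rfl)
  -- Fhat a = a for a ∈ Q_f
  have hfix : ∀ a ∈ PartialAction.Qset P c.f, Fhat a = a := by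
    intro a ha
    rw [hFhat]
    have hterm : ∀ g ∈ Finset.univ, c.finv g * P.act g (w * a * P.e g⁻¹)
        = P.act g (w * P.e g⁻¹) * a := by
      intro g _
      have hsplit : P.act g (w * a * P.e g⁻¹)
          = P.act g (w * P.e g⁻¹) * P.act g (a * P.e g⁻¹) := by
        rw [← P.act_mul]; congr 1; exact aux_split _ _ _ (P.e_idem g⁻¹)
      rw [hsplit, ha g]
      have hm : P.act g (w * P.e g⁻¹) * P.e g = P.act g (w * P.e g⁻¹) := by
        rw [P.act_restrict, P.act_mem]
      calc c.finv g * (P.act g (w * P.e g⁻¹) * (c.f g * a))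
          = (P.act g (w * P.e g⁻¹) * (c.f g * c.finv g)) * a := by ring
        _ = (P.act g (w * P.e g⁻¹) * P.e g) * a := by rw [c.f_mul_finv]
        _ = P.act g (w * P.e g⁻¹) * a := by rw [hm]
    rw [Finset.sum_congr rfl hterm, ← Finset.sum_mul, hw, one_mul]
  have hQsub : PartialAction.Qset P c.f ⊆ Set.range Fhat := by
    intro a ha; exact ⟨a, hfix a ha⟩
  have hhat_range : Set.range Fhat = PartialAction.Qset P c.f := by
    apply Set.Subset.antisymm
    · rintro _ ⟨x, rfl⟩
      rw [hhat]
      exact htilde_mem (w * x)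
    · exact hQsub
  refine ⟨Set.Subset.antisymm ?_ ?_, hhat_range⟩
  · rintro _ ⟨x, rfl⟩
    exact hQsub (htilde_mem x)
  · rintro _ ⟨x, rfl⟩
    exact ⟨w * x, (hhat x).symm⟩
end

section
/- Let S ⊇ R be a partial n-kummerian extension of an abelian group G of order n, and let ĝ denote the character group Hom(G, ⟨ω⟩). For each character χ, the map χ_p : g ↦ χ(g) 1_g is a partial 1-cocycle, and the set Ĝ_par = {χ_p : χ ∈ Ĝ} is a subgroup of Z¹(G, α, S). Moreover the map χ ↦ χ_p is a group epimorphism Ĝ → Ĝ_par with kernel {χ : χ(g) = 1 whenever 1_g ≠ 0}. -/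
/-- for a partial `n`-kummerian extension, each `χ_p : g ↦ χ(g) 1_g` is a
partial 1-cocycle, `Ĝ_par` is a subgroup of `Z¹(G,α,S)` (the map `χ ↦ χ_p` is a
multiplicative epimorphism), and its kernel is `{χ : χ(g) = 1 whenever 1_g ≠ 0}`. -/
theorem chi_p_cocycle_and_kernel {G : Type*} [CommGroup G] [Fintype G] [DecidableEq G]
    {S : Type*} [CommRing S] (P : PartialAction G S) (R : Subring S)
    (hGal : P.IsPartialGalois R)
    (ω : S) (hωR : ω ∈ R) (hωu : IsUnit ω) (hω : ω ^ Fintype.card G = 1)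
    (hkum : ∀ i : ℕ, 1 ≤ i → i ≤ Fintype.card G - 1 → IsUnit (1 - ω ^ i))
    (χ : G →* Sˣ) (hχ : ∀ g : G, ((χ g : S)) ∈ Submonoid.powers ω) :
    (∀ g h : G, ((χ (g * h) : S) * P.e (g * h)) * P.e g =
        ((χ g : S) * P.e g) * P.act g ((χ h : S) * P.e h * P.e g⁻¹)) ∧
    (∀ g : G, ((χ g : S) * P.e g) * (((χ g)⁻¹ : Sˣ) * P.e g) = P.e g) ∧
    (∀ χ' : G →* Sˣ, (∀ g : G, ((χ' g : S)) ∈ Submonoid.powers ω) →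
      ∀ g : G, (((χ * χ') g : S) * P.e g) = ((χ g : S) * P.e g) * ((χ' g : S) * P.e g)) ∧
    ((∀ g : G, (χ g : S) * P.e g = P.e g) ↔ ∀ g : G, P.e g ≠ 0 → (χ g : S) = 1) := by
  have hinv : ∀ x : S, x ∈ R → ∀ g : G, P.act g (x * P.e g⁻¹) = x * P.e g := by
    intro x hx g
    have : x ∈ P.invariants := hGal.1 ▸ hx
    exact this g
  have hχR : ∀ g : G, ((χ g : S)) ∈ R := by
    intro g
    obtain ⟨k, hk⟩ := hχ g
    exact hk ▸ pow_mem hωR k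
  refine ⟨?_, ?_, ?_, ?_⟩
  · intro g h
    have h1 : (χ h : S) * P.e h * P.e g⁻¹ = ((χ h : S) * P.e g⁻¹) * (P.e g⁻¹ * P.e h) := by
      linear_combination -((χ h : S) * P.e h) * (P.e_idem g⁻¹)
    rw [h1, P.act_mul, hinv _ (hχR h) g, P.act_inter]
    have h2 : ((χ (g * h) : S)) = (χ g : S) * (χ h : S) := by
      rw [map_mul]; rfl
    rw [h2]
    linear_combination (-((χ g : S) * (χ h : S) * P.e (g * h)) * (P.e g + 1)) * (P.e_idem g)
  · intro g
    have h2 : (χ g : S) * ((χ g)⁻¹ : Sˣ) = 1 := by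
      rw [← Units.val_mul, mul_inv_cancel, Units.val_one]
    linear_combination P.e g * P.e g * h2 + P.e_idem g
  · intro χ' _ g
    have h2 : (((χ * χ') g : S)) = (χ g : S) * (χ' g : S) := rfl
    rw [h2]
    linear_combination -((χ g : S) * (χ' g : S)) * (P.e_idem g)
  · constructor
    · intro h g hg
      obtain ⟨k, hk⟩ := hχ g
      have hk' : ω ^ k = (χ g : S) := hk
      have hn : 0 < Fintype.card G := Fintype.card_pos
      have hωk : ω ^ k = ω ^ (k % Fintype.card G) := by
        conv_lhs => rw [← Nat.div_add_mod k (Fintype.card G)]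
        rw [pow_add, pow_mul, hω, one_pow, one_mul]
      rcases Nat.eq_zero_or_pos (k % Fintype.card G) with h0 | hpos
      · rw [← hk', hωk, h0, pow_zero]
      · exfalso
        have hlt : k % Fintype.card G < Fintype.card G := Nat.mod_lt _ hn
        have hu : IsUnit (1 - ω ^ (k % Fintype.card G)) := hkum _ hpos (by omega)
        have heq : (1 - ω ^ (k % Fintype.card G)) * P.e g = 0 := by
          have := h g
          rw [← hk', hωk] at this
          linear_combination -this
        exact hg (by
          obtain ⟨u, hu⟩ := hu
          have : (↑u⁻¹ : S) * ((1 - ω ^ (k % Fintype.card G)) * P.e g) = P.e g := by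
            rw [← mul_assoc, ← hu, ← Units.val_mul, inv_mul_cancel, Units.val_one, one_mul]
          rw [heq, mul_zero] at this
          exact this.symm)
    · intro h g
      by_cases hg : P.e g = 0
      · rw [hg, mul_zero]
      · rw [h g hg, one_mul]
end
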